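/- Let r₂ be a real number with r₂ < 0 and set s = √(−3r₂). For all real u and v with u ≠ 0, v ≠ 0, u + v ≠ 0 and u − v ≠ 0 (so in particular ℘_d(u) ≠ ℘_d(v)), the degenerate zeta identity holds: ℘_d'(u)/(℘_d(u) − ℘_d(v)) = ζ_d(u + v) + ζ_d(u − v) − 2·ζ_d(u), where ℘_d'(ξ) = −2·(−3r₂)^(3/2)·cosh(s·ξ)/sinh(s·ξ)³. -/

import Mathlib

/-- Degenerate Weierstrass ℘-function `℘_d(ξ) = −r₂ − 3r₂/sinh(sξ)²`, `s = √(−3r₂)`. -/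
noncomputable def pd (r₂ ξ : ℝ) : ℝ :=
  -r₂ - 3*r₂ / (Real.sinh (Real.sqrt (-3*r₂) * ξ))^2

/-- Its derivative `℘_d'(ξ) = −2(−3r₂)^(3/2)·cosh(sξ)/sinh(sξ)³`. -/
noncomputable def pd' (r₂ ξ : ℝ) : ℝ :=
  -2*(-3*r₂)^((3:ℝ)/2) * Real.cosh (Real.sqrt (-3*r₂) * ξ) /
    (Real.sinh (Real.sqrt (-3*r₂) * ξ))^3

/-- Degenerate Weierstrass ζ-function `ζ_d(ξ) = r₂ξ + s·coth(sξ)`, `s = √(−3r₂)`. -/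
noncomputable def zd (r₂ ξ : ℝ) : ℝ :=
  r₂*ξ + Real.sqrt (-3*r₂) *
    (Real.cosh (Real.sqrt (-3*r₂) * ξ) / Real.sinh (Real.sqrt (-3*r₂) * ξ))

/-- Degenerate Weierstrass σ-function `σ_d(ξ) = exp(r₂ξ²/2)·sinh(sξ)/s`, `s = √(−3r₂)`. -/
noncomputable def sd (r₂ ξ : ℝ) : ℝ :=
  Real.exp (r₂*ξ^2/2) * Real.sinh (Real.sqrt (-3*r₂) * ξ) / Real.sqrt (-3*r₂)

/-!
With `x = s u`, `y = s v` one has `℘_d = -r₂ + s² / sinh² (s ·)` and `℘_d' = -2 s³ cosh / sinh³`,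
while the linear parts `r₂ ξ` of the three ζ_d terms cancel. After dividing by `s` the claim
becomes an identity between hyperbolic functions, which rests on
`sinh² x - sinh² y = sinh (x + y) sinh (x - y)` and `coth a + coth b = sinh (a + b) / (sinh a sinh b)`.
-/

open Real

lemma Real.sinh_sq_sub_sinh_sq (x y : ℝ) :
    sinh x ^ 2 - sinh y ^ 2 = sinh (x + y) * sinh (x - y) := by
  rw [sinh_add, sinh_sub]
  linear_combination sinh y ^ 2 * cosh_sq x - sinh x ^ 2 * cosh_sq y

lemma Real.coth_add_coth {a b : ℝ} (ha : sinh a ≠ 0) (hb : sinh b ≠ 0) :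
    cosh a / sinh a + cosh b / sinh b = sinh (a + b) / (sinh a * sinh b) := by
  rw [sinh_add]
  field_simp
  ring

lemma Real.coth_add_add_coth_sub_sub_two_coth {x y : ℝ} (hx : sinh x ≠ 0) (hy : sinh y ≠ 0)
    (hxy : sinh (x + y) ≠ 0) (hxy' : sinh (x - y) ≠ 0) :
    -2 * cosh x / sinh x ^ 3 / (1 / sinh x ^ 2 - 1 / sinh y ^ 2) =
      cosh (x + y) / sinh (x + y) + cosh (x - y) / sinh (x - y) - 2 * (cosh x / sinh x) := by
  have hsum : x + y + (x - y) = 2 * x := by ring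
  have hdiff : sinh x ^ 2 - sinh y ^ 2 ≠ 0 := by
    rw [sinh_sq_sub_sinh_sq]; exact mul_ne_zero hxy hxy'
  have hdiff' : sinh y ^ 2 - sinh x ^ 2 ≠ 0 := sub_ne_zero.mpr (sub_ne_zero.mp hdiff).symm
  rw [coth_add_coth hxy hxy', hsum, sinh_two_mul, ← sinh_sq_sub_sinh_sq]
  field_simp
  ring

section Degenerate

variable {r₂ : ℝ}

lemma sinh_sqrt_mul_ne_zero (hr : r₂ < 0) {ξ : ℝ} (hξ : ξ ≠ 0) :
    sinh (√(-3 * r₂) * ξ) ≠ 0 := by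
  rw [ne_eq, sinh_eq_zero]
  exact mul_ne_zero (sqrt_pos.mpr (by linarith)).ne' hξ

lemma pd_eq (hr : r₂ ≤ 0) (ξ : ℝ) :
    pd r₂ ξ = -r₂ + √(-3 * r₂) ^ 2 / sinh (√(-3 * r₂) * ξ) ^ 2 := by
  rw [pd, sq_sqrt (by linarith)]
  ring

lemma pd'_eq (hr : r₂ ≤ 0) (ξ : ℝ) :
    pd' r₂ ξ = -2 * √(-3 * r₂) ^ 3 * cosh (√(-3 * r₂) * ξ) / sinh (√(-3 * r₂) * ξ) ^ 3 := by
  rw [pd', rpow_div_two_eq_sqrt _ (by linarith), rpow_ofNat]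

end Degenerate

/-- Degenerate zeta identity:
`℘_d'(u)/(℘_d(u) − ℘_d(v)) = ζ_d(u+v) + ζ_d(u−v) − 2ζ_d(u)`. -/
theorem stmt_18 (r₂ : ℝ) (hr : r₂ < 0) (u v : ℝ) (hu : u ≠ 0) (hv : v ≠ 0)
    (huv : u + v ≠ 0) (huv' : u - v ≠ 0) :
    pd' r₂ u / (pd r₂ u - pd r₂ v) =
      zd r₂ (u + v) + zd r₂ (u - v) - 2 * zd r₂ u := by
  rw [pd'_eq hr.le, pd_eq hr.le, pd_eq hr.le]
  set s := √(-3 * r₂)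
  have hsu := sinh_sqrt_mul_ne_zero hr hu
  have hsv := sinh_sqrt_mul_ne_zero hr hv
  have hcoth := coth_add_add_coth_sub_sub_two_coth hsu hsv
    (by rw [← mul_add]; exact sinh_sqrt_mul_ne_zero hr huv)
    (by rw [← mul_sub]; exact sinh_sqrt_mul_ne_zero hr huv')
  rw [← mul_add, ← mul_sub] at hcoth
  calc -2 * s ^ 3 * cosh (s * u) / sinh (s * u) ^ 3 /
        (-r₂ + s ^ 2 / sinh (s * u) ^ 2 - (-r₂ + s ^ 2 / sinh (s * v) ^ 2))
      = s * (-2 * cosh (s * u) / sinh (s * u) ^ 3 /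
          (1 / sinh (s * u) ^ 2 - 1 / sinh (s * v) ^ 2)) := by
        have hs0 : s ≠ 0 := (sqrt_pos.mpr (by linarith)).ne'
        rw [show ∀ a b : ℝ, -r₂ + s ^ 2 / a - (-r₂ + s ^ 2 / b) = s ^ 2 * (1 / a - 1 / b) by
          intros; ring]
        field_simp
    _ = zd r₂ (u + v) + zd r₂ (u - v) - 2 * zd r₂ u := by
        rw [hcoth, zd, zd, zd]
        ring
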